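/- For all 1 ≤ i ≤ j ≤ e: (i) every Λ_e-module endomorphism of the uniserial module U_{[i,j]} is a scalar multiple of the identity; and (ii) the identity of U_{[i,j]} does not factor through any projective Λ_e-module. Consequently the stable endomorphism ring of U_{[i,j]} is isomorphic to k. -/

import Mathlib

/-! Common framework: representations of the quiver Q_e / modules over the
generalized Brauer star algebra Λ_e, encoded as a module `V` together with
endomorphisms `v i` (images of the vertex idempotents), `a i` (images of the
arrows; `a i` is the arrow leaving vertex `i`, with `a ⟨e-1⟩` the arrow
`α_e : e → 1`) and `d` (image of the loop `δ`). -/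

namespace GBTA

structure PreRep (R : Type) [CommRing R] (e : ℕ) : Type 1 where
  V : Type
  [instAdd : AddCommGroup V]
  [instMod : Module R V]
  v : Fin e → Module.End R V
  a : Fin e → Module.End R V
  d : Module.End R V

attribute [instance] PreRep.instAdd PreRep.instMod

variable {R : Type} [CommRing R] {e : ℕ}

/-- The (0-based) index of the vertex `e`. -/
def ve (e : ℕ) [NeZero e] : Fin e :=
  ⟨e - 1, by have := Nat.pos_of_ne_zero (NeZero.ne e); omega⟩

/-- The (0-based) index of the vertex `e - 1`. -/
def vem (e : ℕ) [NeZero e] : Fin e :=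
  ⟨e - 2, by have := Nat.pos_of_ne_zero (NeZero.ne e); omega⟩

open Fin.NatCast in
/-- The cycle `C_i`: the composite of the `e` cyclically consecutive arrows
starting with the arrow leaving vertex `i` (composites written right to left). -/
def cyc [NeZero e] (ρ : PreRep R e) (i : Fin e) : Module.End R ρ.V :=
  (((List.range e).reverse).map fun (l : ℕ) => ρ.a (i + (l : Fin e))).prod

/-- The defining relations of the generalized Brauer star algebra `Λ_e`. -/
def Satisfies [NeZero e] (ρ : PreRep R e) : Prop :=
  (∀ i j : Fin e, i ≠ j → ρ.v i * ρ.v j = 0) ∧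
  (∀ i : Fin e, ρ.v i * ρ.v i = ρ.v i) ∧
  ((∑ i : Fin e, ρ.v i) = 1) ∧
  (∀ i : Fin e, ρ.a i = ρ.v (i + 1) * ρ.a i * ρ.v i) ∧
  (ρ.d = ρ.v (ve e) * ρ.d * ρ.v (ve e)) ∧
  (ρ.d * ρ.a (vem e) = 0) ∧
  (ρ.a (ve e) * ρ.d = 0) ∧
  (ρ.d * ρ.d = cyc ρ (ve e) * cyc ρ (ve e)) ∧
  (∀ i : Fin e, i ≠ ve e → ρ.a i * (cyc ρ i * cyc ρ i) = 0)

/-- The space of `Λ_e`-module homomorphisms `ρ → σ`: linear maps commuting with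
all the structure maps. -/
def homSet (ρ σ : PreRep R e) : Submodule R (ρ.V →ₗ[R] σ.V) where
  carrier := {f | (∀ i, f ∘ₗ ρ.v i = σ.v i ∘ₗ f) ∧ (∀ i, f ∘ₗ ρ.a i = σ.a i ∘ₗ f) ∧
    f ∘ₗ ρ.d = σ.d ∘ₗ f}
  add_mem' := by
    rintro f g ⟨hfv, hfa, hfd⟩ ⟨hgv, hga, hgd⟩
    exact ⟨fun i => by simp only [LinearMap.add_comp, LinearMap.comp_add, hfv i, hgv i],
      fun i => by simp only [LinearMap.add_comp, LinearMap.comp_add, hfa i, hga i],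
      by simp only [LinearMap.add_comp, LinearMap.comp_add, hfd, hgd]⟩
  zero_mem' := ⟨fun i => by simp, fun i => by simp, by simp⟩
  smul_mem' := by
    rintro c f ⟨hfv, hfa, hfd⟩
    exact ⟨fun i => by simp only [LinearMap.smul_comp, LinearMap.comp_smul, hfv i],
      fun i => by simp only [LinearMap.smul_comp, LinearMap.comp_smul, hfa i],
      by simp only [LinearMap.smul_comp, LinearMap.comp_smul, hfd]⟩

/-- Projectivity of a `Λ_e`-module, via the lifting property in the category of
`Λ_e`-modules. -/
def IsProjective [NeZero e] (P : PreRep R e) : Prop :=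
  Satisfies P ∧
  ∀ (A B : PreRep R e), Satisfies A → Satisfies B →
    ∀ p ∈ homSet A B, Function.Surjective p →
      ∀ g ∈ homSet P B, ∃ h ∈ homSet P A, p ∘ₗ h = g

/-- An endomorphism `f` of `ρ` factors through a projective `Λ_e`-module. -/
def FactorsThroughProjective [NeZero e] (ρ : PreRep R e) (f : ρ.V →ₗ[R] ρ.V) : Prop :=
  ∃ P : PreRep R e, IsProjective P ∧ ∃ g ∈ homSet ρ P, ∃ h ∈ homSet P ρ, f = h ∘ₗ g

/-- "The stable endomorphism ring of `ρ` is isomorphic to the scalars": the identity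
does not factor through a projective, and modulo endomorphisms factoring through
projectives every endomorphism is a scalar multiple of the identity. -/
def StableEndIsoScalars [NeZero e] (ρ : PreRep R e) : Prop :=
  (¬ FactorsThroughProjective ρ LinearMap.id) ∧
  ∀ f ∈ homSet ρ ρ, ∃ c : R, FactorsThroughProjective ρ (f - c • LinearMap.id)

/-- The linear map on `Fin m → W` sending the `src` coordinate to the `dst`
coordinate through `g`, and killing all other coordinates. -/
def mk1 {m : ℕ} {W : Type} [AddCommGroup W] [Module R W] (src dst : Fin m)
    (g : W →ₗ[R] W) : (Fin m → W) →ₗ[R] (Fin m → W) where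
  toFun x := fun r => if r = dst then g (x src) else 0
  map_add' x y := by funext r; by_cases h : r = dst <;> simp [h]
  map_smul' c x := by funext r; by_cases h : r = dst <;> simp [h]

/-- Projection onto the coordinates satisfying `S`. -/
def prj {m : ℕ} {W : Type} [AddCommGroup W] [Module R W] (S : Fin m → Prop)
    [DecidablePred S] : (Fin m → W) →ₗ[R] (Fin m → W) where
  toFun x := fun r => if S r then x r else 0
  map_add' x y := by funext r; by_cases h : S r <;> simp [h]
  map_smul' c x := by funext r; by_cases h : S r <;> simp [h]

/-- Last row index (`e`, 0-based) among `e+1` rows. -/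
def lastRow (e : ℕ) : Fin (e + 1) := ⟨e, Nat.lt_succ_self e⟩

/-- Second-to-last row index (`e-1`, 0-based) among `e+1` rows. -/
def sndRow (e : ℕ) : Fin (e + 1) := ⟨e - 1, by omega⟩

/-- The vertex carrying each of the `e+1` rows: row `r < e-1` sits at vertex `r`,
rows `e-1` and `e` sit at the vertex `e` (0-based index `e-1`). -/
def vrt (e : ℕ) [NeZero e] : Fin (e + 1) → Fin e := fun r =>
  if h : r.val < e - 1 then ⟨r.val, by omega⟩ else ve e


/-- The `n × n` Jordan block with eigenvalue `lam`. -/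
def jordan (R : Type) [CommRing R] (n : ℕ) (lam : R) : Matrix (Fin n) (Fin n) R :=
  Matrix.of fun i j => if i = j then lam else if (j : ℕ) = (i : ℕ) + 1 then 1 else 0

/-- The band module `B(n, lam)`. Rows `0, …, e-2` are the components `k^n` at the
vertices `1, …, e-1`; rows `e-1` and `e` are the two copies of `k^n` at vertex `e`. -/
@[reducible] def band (R : Type) [CommRing R] (e : ℕ) [NeZero e] (n : ℕ) (lam : R) : PreRep R e where
  V := Fin (e + 1) → Fin n → R
  v i := prj fun r => vrt e r = i
  a j :=
    if j.val = e - 1 then mk1 (sndRow e) ⟨0, by omega⟩ LinearMap.id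
    else if j.val = e - 2 then mk1 ⟨e - 2, by omega⟩ (lastRow e) LinearMap.id
    else mk1 ⟨j.val, Nat.lt_succ_of_lt j.isLt⟩ ⟨j.val + 1, Nat.succ_lt_succ j.isLt⟩ LinearMap.id
  d := mk1 (sndRow e) (lastRow e) (Matrix.mulVecLin (jordan R n lam))

/-- The band module `B(1, s)` (with `δ` acting through the scalar `s`); the standard
basis vector `c_i` (`1 ≤ i ≤ e-1`) is the `i-1`-st coordinate, `c_e` the `e-1`-st and
`c_{e+1}` the `e`-th. -/
@[reducible] def band1 (R : Type) [CommRing R] (e : ℕ) [NeZero e] (s : R) : PreRep R e where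
  V := Fin (e + 1) → R
  v i := prj fun r => vrt e r = i
  a j :=
    if j.val = e - 1 then mk1 (sndRow e) ⟨0, by omega⟩ LinearMap.id
    else if j.val = e - 2 then mk1 ⟨e - 2, by omega⟩ (lastRow e) LinearMap.id
    else mk1 ⟨j.val, Nat.lt_succ_of_lt j.isLt⟩ ⟨j.val + 1, Nat.succ_lt_succ j.isLt⟩ LinearMap.id
  d := mk1 (sndRow e) (lastRow e) (s • LinearMap.id)

/-- The projective module `P_e`, with basis `b_{i,1}, b_{i,2}` (row `i-1`) for
`1 ≤ i ≤ e-1` and `b_{e,1}, b_{e,2}` (row `e-1`), `b_{e,3}, b_{e,4}` (row `e`). -/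
@[reducible] def Pe (R : Type) [CommRing R] (e : ℕ) [NeZero e] : PreRep R e where
  V := Fin (e + 1) → Fin 2 → R
  v i := prj fun r => vrt e r = i
  a j :=
    if j.val = e - 1 then mk1 (sndRow e) ⟨0, by omega⟩ LinearMap.id
    else if j.val = e - 2 then
      mk1 ⟨e - 2, by omega⟩ (sndRow e) (Matrix.mulVecLin !![0, 0; 1, 0])
        + mk1 ⟨e - 2, by omega⟩ (lastRow e) (Matrix.mulVecLin !![0, 0; 0, 1])
    else mk1 ⟨j.val, Nat.lt_succ_of_lt j.isLt⟩ ⟨j.val + 1, Nat.succ_lt_succ j.isLt⟩ LinearMap.id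
  d := mk1 (sndRow e) (lastRow e) (Matrix.mulVecLin !![1, 0; 0, 0])
    + mk1 (lastRow e) (lastRow e) (Matrix.mulVecLin !![0, 0; 1, 0])

/-- `Mdef R e τ`: the representation with basis `m_1, …, m_{e+1}` (rows `0, …, e`),
`α_j(m_j) = m_{j+1}` for `j ≤ e-2`, `α_{e-1}(m_{e-1}) = τ · m_{e+1}`,
`α_e(m_e) = m_1`, `δ(m_e) = m_{e+1}`.  For `τ = 0` this is the string module `W`. -/
@[reducible] def Mdef (R : Type) [CommRing R] (e : ℕ) [NeZero e] (t : R) : PreRep R e where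
  V := Fin (e + 1) → R
  v i := prj fun r => vrt e r = i
  a j :=
    if j.val = e - 1 then mk1 (sndRow e) ⟨0, by omega⟩ LinearMap.id
    else if j.val = e - 2 then mk1 ⟨e - 2, by omega⟩ (lastRow e) (t • LinearMap.id)
    else mk1 ⟨j.val, Nat.lt_succ_of_lt j.isLt⟩ ⟨j.val + 1, Nat.succ_lt_succ j.isLt⟩ LinearMap.id
  d := mk1 (sndRow e) (lastRow e) LinearMap.id

/-- The uniserial module `U_{[i,j]}` (with `1 ≤ i ≤ j ≤ e`, 1-based). -/
@[reducible] def U (R : Type) [CommRing R] (e i j : ℕ) : PreRep R e where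
  V := Fin (j + 1 - i) → R
  v t := prj fun r => i - 1 + r.val = t.val
  a t :=
    if h : i ≤ t.val + 1 ∧ t.val + 1 ≤ j - 1 then
      mk1 ⟨t.val + 1 - i, by omega⟩ ⟨t.val + 2 - i, by omega⟩ LinearMap.id
    else 0
  d := 0

/-- The uniserial projective module `P_i` (`i0` is the 0-based index of the vertex),
with basis `p_0, …, p_{2e}` following the cycle of arrows twice around. -/
@[reducible] def Puni (R : Type) [CommRing R] (e : ℕ) [NeZero e] (i0 : ℕ) : PreRep R e where
  V := Fin (2 * e + 1) → R
  v t := prj fun r => (i0 + r.val) % e = t.val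
  a t := ∑ l : Fin (2 * e),
    if (i0 + l.val) % e = t.val then mk1 l.castSucc l.succ LinearMap.id else 0
  d := 0

/-- The simple module `S_e` at the vertex `e`. -/
@[reducible] def Se (R : Type) [CommRing R] (e : ℕ) [NeZero e] : PreRep R e where
  V := R
  v i := if i = ve e then 1 else 0
  a _ := 0
  d := 0

/-- Block upper triangular endomorphism `(x, y) ↦ (f x + θ y, f y)` of `V × V`. -/
def blk {V : Type} [AddCommGroup V] [Module R V] (f th : Module.End R V) :
    Module.End R (V × V) where
  toFun p := (f p.1 + th p.2, f p.2)
  map_add' p q := by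
    simp only [Prod.fst_add, Prod.snd_add, map_add, Prod.mk_add_mk, Prod.mk.injEq, and_true]
    abel
  map_smul' c p := by
    simp only [Prod.smul_fst, Prod.smul_snd, map_smul, Prod.smul_mk, Prod.mk.injEq,
      smul_add, RingHom.id_apply, and_self]

section Ext
variable [NeZero e]

/-- The data of a self-extension of `ρ`: for each generator of `Λ_e`, the
off-diagonal block of its action on `ρ.V × ρ.V`. -/
abbrev Cochain (ρ : PreRep R e) : Type :=
  (Fin e → Module.End R ρ.V) × (Fin e → Module.End R ρ.V) × Module.End R ρ.V

/-- The self-extension of `ρ` determined by the cochain `θ`. -/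
@[reducible] def extRep (ρ : PreRep R e) (th : Cochain ρ) : PreRep R e where
  V := ρ.V × ρ.V
  v i := blk (ρ.v i) (th.1 i)
  a i := blk (ρ.a i) (th.2.1 i)
  d := blk ρ.d th.2.2

/-- `θ` is a cocycle precisely when the corresponding extension is a `Λ_e`-module. -/
def IsCocycle (ρ : PreRep R e) (th : Cochain ρ) : Prop := Satisfies (extRep ρ th)

/-- The coboundary of `φ`; extensions differing by a coboundary are equivalent. -/
def bnd (ρ : PreRep R e) (phi : Module.End R ρ.V) : Cochain ρ :=
  (fun i => ρ.v i * phi - phi * ρ.v i, fun i => ρ.a i * phi - phi * ρ.a i,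
    ρ.d * phi - phi * ρ.d)

/-- `Ext¹_{Λ_e}(ρ, ρ)`, i.e. the space of self-extensions of `ρ` modulo equivalence
(equivalently cocycles modulo coboundaries), is one-dimensional. -/
def ExtSelfOneDimensional (ρ : PreRep R e) : Prop :=
  ∃ th0 : Cochain ρ, IsCocycle ρ th0 ∧ (∀ phi, th0 ≠ bnd ρ phi) ∧
    ∀ th : Cochain ρ, IsCocycle ρ th → ∃ (c : R) (phi : Module.End R ρ.V),
      th = c • th0 + bnd ρ phi

end Ext


/-- The endomorphism algebra of a representation. -/
def endAlg (ρ : PreRep R e) : Subalgebra R (Module.End R ρ.V) where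
  carrier := {f | (∀ i, f * ρ.v i = ρ.v i * f) ∧ (∀ i, f * ρ.a i = ρ.a i * f) ∧
    f * ρ.d = ρ.d * f}
  mul_mem' := by
    rintro f g ⟨hfv, hfa, hfd⟩ ⟨hgv, hga, hgd⟩
    refine ⟨fun i => ?_, fun i => ?_, ?_⟩
    · rw [mul_assoc, hgv i, ← mul_assoc, hfv i, mul_assoc]
    · rw [mul_assoc, hga i, ← mul_assoc, hfa i, mul_assoc]
    · rw [mul_assoc, hgd, ← mul_assoc, hfd, mul_assoc]
  one_mem' := ⟨fun i => by rw [one_mul, mul_one], fun i => by rw [one_mul, mul_one],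
    by rw [one_mul, mul_one]⟩
  add_mem' := by
    rintro f g ⟨hfv, hfa, hfd⟩ ⟨hgv, hga, hgd⟩
    exact ⟨fun i => by rw [add_mul, mul_add, hfv i, hgv i],
      fun i => by rw [add_mul, mul_add, hfa i, hga i],
      by rw [add_mul, mul_add, hfd, hgd]⟩
  zero_mem' := ⟨fun i => by rw [zero_mul, mul_zero], fun i => by rw [zero_mul, mul_zero],
    by rw [zero_mul, mul_zero]⟩
  algebraMap_mem' c :=
    ⟨fun i => Algebra.commutes c (ρ.v i), fun i => Algebra.commutes c (ρ.a i),
      Algebra.commutes c ρ.d⟩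

/-- The endomorphism `τ` of `B(1,λ)` (and of `W`): `c_e ↦ c_{e+1}`, all other
standard basis vectors to `0`. -/
def tau (R : Type) [CommRing R] (e : ℕ) : (Fin (e + 1) → R) →ₗ[R] (Fin (e + 1) → R) :=
  mk1 (sndRow e) (lastRow e) LinearMap.id

/-- The map `r₁ : B(1,λ) → P_e` (with parameter `μ` the coefficient on `b_{e,3}`):
`c_i ↦ b_{i,2}` for `1 ≤ i ≤ e-1`, `c_e ↦ b_{e,2} + μ b_{e,3}`, `c_{e+1} ↦ b_{e,4}`. -/
def r1 (R : Type) [CommRing R] (e : ℕ) (mu : R) :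
    (Fin (e + 1) → R) →ₗ[R] (Fin (e + 1) → Fin 2 → R) where
  toFun x := fun r c => if c = 1 then x r else if r = lastRow e then mu * x (sndRow e) else 0
  map_add' x y := by
    funext r c
    by_cases h : c = 1
    · simp [h]
    · by_cases h2 : r = lastRow e <;> simp [h, h2, mul_add]
  map_smul' t x := by
    funext r c
    by_cases h : c = 1
    · simp [h]
    · by_cases h2 : r = lastRow e <;> simp [h, h2] <;> ring

/-- The map `r₂ : B(1,λ) → P_e`: `c_e ↦ b_{e,4}`, all other basis vectors to `0`. -/
def r2 (R : Type) [CommRing R] (e : ℕ) :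
    (Fin (e + 1) → R) →ₗ[R] (Fin (e + 1) → Fin 2 → R) where
  toFun x := fun r c => if r = lastRow e ∧ c = 1 then x (sndRow e) else 0
  map_add' x y := by
    funext r c
    by_cases h : r = lastRow e ∧ c = 1 <;> simp [h]
  map_smul' t x := by
    funext r c
    by_cases h : r = lastRow e ∧ c = 1 <;> simp [h]

/-- The map `s₁ : P_e → B(1,λ)`: `b_{e,1} ↦ c_e`, `b_{e,2} ↦ c_{e+1}`,
`b_{e,3} ↦ λ c_{e+1}`, `b_{i,1} ↦ c_i`; zero on `b_{e,4}` and the `b_{i,2}`. -/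
def s1 (R : Type) [CommRing R] (e : ℕ) (lam : R) :
    (Fin (e + 1) → Fin 2 → R) →ₗ[R] (Fin (e + 1) → R) where
  toFun y := fun r =>
    if r = lastRow e then y (sndRow e) 1 + lam * y (lastRow e) 0 else y r 0
  map_add' x y := by
    funext r
    by_cases h : r = lastRow e <;> simp [h, mul_add] <;> ring
  map_smul' t x := by
    funext r
    by_cases h : r = lastRow e <;> simp [h] <;> ring

/-- The map `s₂ : P_e → B(1,λ)`: `b_{e,1} ↦ c_{e+1}`, all other basis vectors to `0`. -/
def s2 (R : Type) [CommRing R] (e : ℕ) :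
    (Fin (e + 1) → Fin 2 → R) →ₗ[R] (Fin (e + 1) → R) where
  toFun y := fun r => if r = lastRow e then y (sndRow e) 0 else 0
  map_add' x y := by funext r; by_cases h : r = lastRow e <;> simp [h]
  map_smul' t x := by funext r; by_cases h : r = lastRow e <;> simp [h]

/-- The map `g : W → P_e`, `w_e ↦ b_{e,3}`, `w_{e+1} ↦ b_{e,4}`, `w_j ↦ 0`. -/
def gW (R : Type) [CommRing R] (e : ℕ) :
    (Fin (e + 1) → R) →ₗ[R] (Fin (e + 1) → Fin 2 → R) where
  toFun x := fun r c =>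
    if r = lastRow e then (if c = 0 then x (sndRow e) else x (lastRow e)) else 0
  map_add' x y := by
    funext r c
    by_cases h : r = lastRow e <;> by_cases h2 : c = 0 <;> simp [h, h2]
  map_smul' t x := by
    funext r c
    by_cases h : r = lastRow e <;> by_cases h2 : c = 0 <;> simp [h, h2]

/-- The map `h : P_e → W`, `b_{e,1} ↦ w_e`, `b_{j,1} ↦ w_j`, `b_{e,3} ↦ w_{e+1}`,
zero on `b_{e,2}`, `b_{e,4}` and the `b_{j,2}`. -/
def hW (R : Type) [CommRing R] (e : ℕ) :
    (Fin (e + 1) → Fin 2 → R) →ₗ[R] (Fin (e + 1) → R) where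
  toFun y := fun r => y r 0
  map_add' x y := rfl
  map_smul' t x := rfl

/-! Since `j ≤ e`, the module `U_{[i,j]}` is the string module of length `N = j - i + 1` winding
around the cycle from the vertex `i`, and no vertex carries more than one of its coordinates.
An endomorphism therefore acts diagonally, and commuting with the arrows forces all diagonal
entries to agree. The string module of length `N + 1 ≤ 2e` is again a `Λ_e`-module (squared
cycles and `δ` act by zero on it), and dropping its socle is an epimorphism onto `U_{[i,j]}`
which does not split: in the longer string the arrow leaving the vertex `j` is nonzero. Were the
identity of `U_{[i,j]}` to factor through a projective, the lifting property would split it. -/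

open Fin.NatCast

section Prj

variable {m : ℕ} {W : Type} [AddCommGroup W] [Module R W]

@[simp]
lemma prj_apply (S : Fin m → Prop) [DecidablePred S] (x : Fin m → W) (r : Fin m) :
    prj (R := R) S x r = if S r then x r else 0 := rfl

lemma prj_mul_prj (S T : Fin m → Prop) [DecidablePred S] [DecidablePred T] :
    prj (R := R) (W := W) S * prj T = prj fun r => S r ∧ T r := by
  refine LinearMap.ext fun x => funext fun r => ?_
  simp only [Module.End.mul_apply, prj_apply, ite_and]

lemma sum_prj_eq_one {ι : Type} [Fintype ι] [DecidableEq ι] (f : Fin m → ι) :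
    ∑ t, prj (R := R) (W := W) (fun r => f r = t) = 1 := by
  refine LinearMap.ext fun x => funext fun r => ?_
  simp [LinearMap.coe_sum, Finset.sum_apply]

end Prj

section Homs

lemma comp_mem_homSet {A B C : PreRep R e} {f : B.V →ₗ[R] C.V} {g : A.V →ₗ[R] B.V}
    (hf : f ∈ homSet B C) (hg : g ∈ homSet A B) : f ∘ₗ g ∈ homSet A C := by
  obtain ⟨hfv, hfa, hfd⟩ := hf
  obtain ⟨hgv, hga, hgd⟩ := hg
  refine ⟨fun t => ?_, fun t => ?_, ?_⟩
  · rw [LinearMap.comp_assoc, hgv t, ← LinearMap.comp_assoc, hfv t, LinearMap.comp_assoc]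
  · rw [LinearMap.comp_assoc, hga t, ← LinearMap.comp_assoc, hfa t, LinearMap.comp_assoc]
  · rw [LinearMap.comp_assoc, hgd, ← LinearMap.comp_assoc, hfd, LinearMap.comp_assoc]

@[reducible] def zeroRep (R : Type) [CommRing R] (e : ℕ) : PreRep R e where
  V := PUnit
  v _ := 0
  a _ := 0
  d := 0

variable [NeZero e]

lemma zeroRep_isProjective : IsProjective (zeroRep R e) := by
  refine ⟨by refine ⟨?_, ?_, ?_, ?_, ?_, ?_, ?_, ?_, ?_⟩ <;> intros <;> exact Subsingleton.elim _ _,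
    fun _ _ _ _ _ _ _ _ _ => ⟨0, zero_mem _, LinearMap.ext fun x => ?_⟩⟩
  simp [Subsingleton.elim x 0]

lemma factorsThroughProjective_zero (ρ : PreRep R e) : FactorsThroughProjective ρ 0 :=
  ⟨zeroRep R e, zeroRep_isProjective, 0, zero_mem _, 0, zero_mem _, rfl⟩

lemma stableEndIsoScalars_of {ρ : PreRep R e} (hid : ¬ FactorsThroughProjective ρ LinearMap.id)
    (hend : ∀ f ∈ homSet ρ ρ, ∃ c : R, f = c • LinearMap.id) : StableEndIsoScalars ρ := by
  refine ⟨hid, fun f hf => ?_⟩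
  obtain ⟨c, rfl⟩ := hend f hf
  exact ⟨c, by simpa using factorsThroughProjective_zero ρ⟩

lemma exists_section_of_factorsThroughProjective_id {ρ A : PreRep R e} (hρ : Satisfies ρ)
    (hA : Satisfies A) (hid : FactorsThroughProjective ρ LinearMap.id) {p : A.V →ₗ[R] ρ.V}
    (hp : p ∈ homSet A ρ) (hsurj : Function.Surjective p) :
    ∃ s ∈ homSet ρ A, p ∘ₗ s = LinearMap.id := by
  obtain ⟨P, ⟨-, hlift⟩, g, hg, h, hh, hhg⟩ := hid
  obtain ⟨h', hh', hph'⟩ := hlift A ρ hA hρ p hp hsurj h hh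
  exact ⟨h' ∘ₗ g, comp_mem_homSet hh' hg, by rw [← LinearMap.comp_assoc, hph', hhg]⟩

end Homs

def IsStrictlyLower {N : ℕ} (f : Module.End R (Fin N → R)) : Prop :=
  ∀ x r, (∀ s, s < r → x s = 0) → f x r = 0

lemma IsStrictlyLower.list_prod_apply_eq_zero {N : ℕ} {F : List (Module.End R (Fin N → R))}
    (hF : ∀ f ∈ F, IsStrictlyLower f) (x : Fin N → R) (r : Fin N) (hr : (r : ℕ) < F.length) :
    F.prod x r = 0 := by
  induction F generalizing r with
  | nil => simp at hr
  | cons f F ih =>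
    refine hF f List.mem_cons_self _ r fun s hs =>
      ih (fun g hg => hF g (List.mem_cons_of_mem _ hg)) s ?_
    simp only [List.length_cons] at hr
    omega

def chainArrow (e : ℕ) [NeZero e] (i0 N : ℕ) (t : Fin e) : Module.End R (Fin N → R) where
  toFun x s :=
    if h : 0 < (s : ℕ) ∧ ((i0 + (s - 1) : ℕ) : Fin e) = t then x ⟨s - 1, by omega⟩ else 0
  map_add' x y := by ext s; simp only [Pi.add_apply]; split_ifs <;> simp
  map_smul' c x := by ext s; simp only [Pi.smul_apply]; split_ifs <;> simp

/-- The string module of length `N` winding around the cycle from the vertex `i0` (0-based):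
coordinate `r` sits at the vertex `i0 + r mod e`, and each arrow moves coordinate `r` to `r + 1`. -/
@[reducible] def chainRep (R : Type) [CommRing R] (e : ℕ) [NeZero e] (i0 N : ℕ) : PreRep R e where
  V := Fin N → R
  v t := prj fun r => ((i0 + r : ℕ) : Fin e) = t
  a := chainArrow e i0 N
  d := 0

section Chain

variable [NeZero e] {i0 N : ℕ}

lemma chainArrow_apply (t : Fin e) (x : Fin N → R) (s : Fin N) :
    chainArrow e i0 N t x s =
      if h : 0 < (s : ℕ) ∧ ((i0 + (s - 1) : ℕ) : Fin e) = t then x ⟨s - 1, by omega⟩ else 0 :=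
  rfl

lemma chainArrow_isStrictlyLower (t : Fin e) : IsStrictlyLower (chainArrow (R := R) e i0 N t) := by
  intro x r hx
  rw [chainArrow_apply]
  split_ifs
  · exact hx _ (Fin.mk_lt_of_lt_val (by omega))
  · rfl

lemma chainArrow_single {m : ℕ} (hm : m + 1 < N) :
    chainArrow e i0 N ((i0 + m : ℕ) : Fin e) (Pi.single ⟨m, by omega⟩ (1 : R)) =
      Pi.single ⟨m + 1, hm⟩ 1 := by
  ext s
  rw [chainArrow_apply]
  split_ifs with h
  · simp only [Pi.single_apply, Fin.ext_iff]
    congr 1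
    exact propext (by omega)
  · rw [Pi.single_apply, if_neg]
    rintro rfl
    exact h ⟨by simp, by simp⟩

lemma chainRep_cyc_mul_cyc (hN : N ≤ 2 * e) (t : Fin e) :
    cyc (chainRep R e i0 N) t * cyc (chainRep R e i0 N) t = 0 := by
  rw [cyc, ← List.prod_append]
  refine LinearMap.ext fun x => funext fun r => IsStrictlyLower.list_prod_apply_eq_zero ?_ x r ?_
  · simp only [List.mem_append, List.mem_map]
    rintro f (⟨l, -, rfl⟩ | ⟨l, -, rfl⟩) <;> exact chainArrow_isStrictlyLower _
  · simp only [List.length_append, List.length_map, List.length_reverse, List.length_range]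
    omega

lemma chainRep_satisfies (hN : N ≤ 2 * e) : Satisfies (chainRep R e i0 N) := by
  have hcyc := chainRep_cyc_mul_cyc (R := R) (i0 := i0) hN
  refine ⟨fun t s hts => ?_, fun t => ?_, sum_prj_eq_one _, fun t => ?_, by simp, by simp, by simp,
    by rw [hcyc, mul_zero], fun t _ => by rw [hcyc, mul_zero]⟩
  · rw [prj_mul_prj]
    refine LinearMap.ext fun x => funext fun r => ?_
    simp only [prj_apply]
    rw [if_neg fun h => hts (h.1.symm.trans h.2)]
    rfl
  · simp only [prj_mul_prj, and_self]
  · refine LinearMap.ext fun x => funext fun s => ?_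
    simp only [Module.End.mul_apply, chainArrow_apply, prj_apply]
    by_cases h : 0 < (s : ℕ) ∧ ((i0 + (s - 1) : ℕ) : Fin e) = t
    · have hs : ((i0 + s : ℕ) : Fin e) = t + 1 := by
        rw [show i0 + (s : ℕ) = i0 + (s - 1) + 1 by omega, Nat.cast_succ, h.2]
      simp only [h, hs, and_self, dite_true, if_true]
    · simp only [h, dite_false, ite_self]

lemma funLeft_castSucc_mem_homSet :
    LinearMap.funLeft R R Fin.castSucc ∈ homSet (chainRep R e i0 (N + 1)) (chainRep R e i0 N) :=
  ⟨fun _ => rfl, fun _ => rfl, by simp⟩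

lemma not_exists_section_funLeft_castSucc [Nontrivial R] (hN : 0 < N) :
    ¬ ∃ σ ∈ homSet (chainRep R e i0 N) (chainRep R e i0 (N + 1)),
      LinearMap.funLeft R R Fin.castSucc ∘ₗ σ = LinearMap.id := by
  rintro ⟨σ, ⟨-, ha, -⟩, hσ⟩
  set top : Fin N := ⟨N - 1, by omega⟩
  set t : Fin e := ((i0 + (N - 1) : ℕ) : Fin e)
  have hkill : chainArrow e i0 N t (Pi.single top (1 : R)) = 0 := by
    ext s
    rw [chainArrow_apply]
    split_ifs
    · simp only [Pi.single_apply, top, Fin.ext_iff]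
      rw [if_neg (by omega)]
      rfl
    · rfl
  have hσtop : σ (Pi.single top 1) top.castSucc = 1 := by
    simpa using congrFun (LinearMap.congr_fun hσ (Pi.single top 1)) top
  have hcomm := congrFun (LinearMap.congr_fun (ha t) (Pi.single top 1)) (Fin.last N)
  rw [LinearMap.comp_apply, LinearMap.comp_apply, hkill, map_zero, chainArrow_apply,
    dif_pos ⟨hN, rfl⟩] at hcomm
  exact zero_ne_one (hcomm.trans hσtop)

lemma chainRep_not_factorsThroughProjective_id [Nontrivial R] (hN : 0 < N)
    (hN2 : N + 1 ≤ 2 * e) : ¬ FactorsThroughProjective (chainRep R e i0 N) LinearMap.id :=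
  fun hid => not_exists_section_funLeft_castSucc hN <|
    exists_section_of_factorsThroughProjective_id (chainRep_satisfies (by omega))
      (chainRep_satisfies hN2) hid funLeft_castSucc_mem_homSet
      (LinearMap.funLeft_surjective_of_injective _ _ _ (Fin.castSucc_injective N))

lemma chainVertex_injective (hN : N ≤ e) :
    Function.Injective fun r : Fin N => ((i0 + r : ℕ) : Fin e) := by
  intro r s h
  have hmod : (r : ℕ) % e = s % e := by simpa [Fin.ext_iff, Fin.val_natCast] using h
  rw [Nat.mod_eq_of_lt (by omega), Nat.mod_eq_of_lt (by omega)] at hmod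
  exact Fin.ext hmod

lemma chainRep_end_apply (hN : N ≤ e) {f : Module.End R (Fin N → R)}
    (hf : f ∈ homSet (chainRep R e i0 N) (chainRep R e i0 N)) (x : Fin N → R) (r : Fin N) :
    f x r = x r * f (Pi.single r 1) r := by
  have hproj : (chainRep R e i0 N).v ((i0 + r : ℕ) : Fin e) x = x r • Pi.single r 1 := by
    ext s
    simp only [prj_apply, (chainVertex_injective hN).eq_iff]
    by_cases hs : s = r
    · subst hs; simp
    · simp [hs]
  have hcomm := congrFun (LinearMap.congr_fun (hf.1 ((i0 + r : ℕ) : Fin e)) x) r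
  rw [LinearMap.comp_apply, LinearMap.comp_apply, hproj, map_smul] at hcomm
  change _ = if _ then _ else _ at hcomm
  rw [if_pos rfl] at hcomm
  simpa using hcomm.symm

lemma chainRep_end_eq_smul_id (hN : 0 < N) (hNe : N ≤ e) (f : Module.End R (Fin N → R))
    (hf : f ∈ homSet (chainRep R e i0 N) (chainRep R e i0 N)) :
    ∃ c : R, f = c • LinearMap.id := by
  have hconst : ∀ m (hm : m < N),
      f (Pi.single ⟨m, hm⟩ 1) ⟨m, hm⟩ = f (Pi.single ⟨0, hN⟩ 1) ⟨0, hN⟩ := by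
    intro m hm
    induction m with
    | zero => rfl
    | succ m ih =>
      have hcomm := congrFun
        (LinearMap.congr_fun (hf.2.1 ((i0 + m : ℕ) : Fin e)) (Pi.single ⟨m, by omega⟩ 1))
        ⟨m + 1, hm⟩
      rw [LinearMap.comp_apply, LinearMap.comp_apply, chainArrow_single hm, chainArrow_apply,
        dif_pos ⟨by simp, by simp⟩] at hcomm
      exact hcomm.trans (ih (by omega))
  refine ⟨f (Pi.single ⟨0, hN⟩ 1) ⟨0, hN⟩, LinearMap.ext fun x => funext fun r => ?_⟩
  rw [chainRep_end_apply hNe hf, hconst r r.isLt, mul_comm]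
  rfl

lemma U_eq_chainRep {i j : ℕ} (hi : 1 ≤ i) (hje : j ≤ e) :
    U R e i j = chainRep R e (i - 1) (j + 1 - i) := by
  have hv : (U R e i j).v = (chainRep R e (i - 1) (j + 1 - i)).v := by
    funext t
    refine LinearMap.ext fun x => funext fun r => ?_
    have hvertex : (((i - 1 + r : ℕ) : Fin e) : ℕ) = i - 1 + r := Fin.val_cast_of_lt (by omega)
    simp only [prj_apply, Fin.ext_iff, hvertex]
  have ha : (U R e i j).a = (chainRep R e (i - 1) (j + 1 - i)).a := by
    funext t
    refine LinearMap.ext fun x => funext fun s => ?_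
    have hvertex : (((i - 1 + (s - 1) : ℕ) : Fin e) : ℕ) = i - 1 + (s - 1) :=
      Fin.val_cast_of_lt (by omega)
    by_cases hc : i ≤ (t : ℕ) + 1 ∧ (t : ℕ) + 1 ≤ j - 1
    · simp only [U, dif_pos hc, mk1, LinearMap.coe_mk, AddHom.coe_mk, chainArrow_apply,
        Fin.ext_iff, hvertex, LinearMap.id_apply]
      split_ifs
      · congr 1; ext; simp only; omega
      all_goals first | rfl | omega
    · simp only [U, dif_neg hc, chainArrow_apply, Fin.ext_iff, hvertex, LinearMap.zero_apply,
        Pi.zero_apply]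
      rw [dif_neg (by omega)]
  change PreRep.mk (Fin (j + 1 - i) → R) (U R e i j).v (U R e i j).a 0 =
    PreRep.mk (Fin (j + 1 - i) → R) (chainRep R e (i - 1) (j + 1 - i)).v
      (chainRep R e (i - 1) (j + 1 - i)).a 0
  rw [hv, ha]

end Chain

theorem uniserial_stable_end_general (k : Type) [Field k] (e : ℕ) [NeZero e]
    (i j : ℕ) (h1 : 1 ≤ i) (hij : i ≤ j) (hje : j ≤ e) :
    (∀ f ∈ homSet (U k e i j) (U k e i j), ∃ c : k, f = c • LinearMap.id) ∧
    (¬ FactorsThroughProjective (U k e i j) LinearMap.id) ∧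
    StableEndIsoScalars (U k e i j) := by
  -- `rw [U_eq_chainRep]` fails here: the goal mentions the `Pi` instances on `(U k e i j).V`.
  suffices ∀ ρ, ρ = chainRep k e (i - 1) (j + 1 - i) →
      (∀ f ∈ homSet ρ ρ, ∃ c : k, f = c • LinearMap.id) ∧
      (¬ FactorsThroughProjective ρ LinearMap.id) ∧ StableEndIsoScalars ρ from
    this _ (U_eq_chainRep h1 hje)
  rintro _ rfl
  have hend := chainRep_end_eq_smul_id (R := k) (e := e) (i0 := i - 1) (N := j + 1 - i)
    (by omega) (by omega)
  have hid := chainRep_not_factorsThroughProjective_id (R := k) (e := e) (i0 := i - 1)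
    (N := j + 1 - i) (by omega) (by omega)
  exact ⟨hend, hid, stableEndIsoScalars_of hid hend⟩

/-- For `1 ≤ i ≤ j ≤ e`: every endomorphism of the uniserial
module `U_{[i,j]}` is a scalar multiple of the identity, the identity does not
factor through a projective `Λ_e`-module, and consequently the stable
endomorphism ring of `U_{[i,j]}` is isomorphic to `k`. -/
theorem uniserial_stable_end (k : Type) [Field k] (e : ℕ) (he : 2 ≤ e) [NeZero e]
    (i j : ℕ) (h1 : 1 ≤ i) (hij : i ≤ j) (hje : j ≤ e) :
    (∀ f ∈ homSet (U k e i j) (U k e i j), ∃ c : k, f = c • LinearMap.id) ∧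
    (¬ FactorsThroughProjective (U k e i j) LinearMap.id) ∧
    StableEndIsoScalars (U k e i j) :=
  uniserial_stable_end_general k e i j h1 hij hje

end GBTA
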